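/- arXiv:1707.01134 — 2 statements merged into one kernel-verified Lean document; each statement's English description precedes it below -/
import Mathlib

section
/- Let B = (B₁,…,B_m) be a random binary vector jointly distributed with Y. For any bit metrics q_j : {0,1} × Y → ℝ>0, the uncertainty ∑_{j=1}^m E[-log₂(q_j(B_j,Y)/∑_b q_j(b,Y))] is at least ∑_{j=1}^m H(B_j|Y), with equality when q_j(b,y) = P_{B_j|Y}(b|y). Consequently the bit-metric-decoding rate R_ps^bmd = [H(B) - ∑_j H(B_j|Y)]⁺ is the maximal layered-PS achievable rate over bit metrics. -/
/-!
For each level `j`, regrouping the expectation by the value of `(B_j, Y)` turns the uncertainty of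
the bit metric `q_j` into a cross entropy of the posterior `P_{B_j|Y}` against the normalised metric
`q_j(·, y) / ∑_b q_j(b, y)`; Gibbs' inequality bounds it below by `H(B_j|Y)`, with equality at the
posterior. The layered metric `∏_j q_j` factors its normaliser as `∏_j ∑_b q_j(b, y)`, so its
uncertainty is the sum of the level uncertainties, and the rate bound follows by monotonicity of
`[H(B) - ·]⁺`.
-/

open Finset Real

theorem sub_le_mul_log_div {p w : ℝ} (hp : 0 < p) (hw : 0 < w) : p - w ≤ p * log (p / w) :=
  calc p - w = p * (1 - (p / w)⁻¹) := by field_simp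
    _ ≤ p * log (p / w) :=
      mul_le_mul_of_nonneg_left (one_sub_inv_le_log_of_pos (by positivity)) hp.le

theorem sum_filter_mul_log_div_nonneg {ι : Type*} [Fintype ι] {p w : ι → ℝ}
    (hp : ∀ i, 0 ≤ p i) (hw : ∀ i, 0 ≤ w i) (hpw : ∀ i, p i ≠ 0 → 0 < w i)
    (hsum : ∑ i, w i ≤ ∑ i, p i) :
    0 ≤ ∑ i with p i ≠ 0, p i * log (p i / w i) := by
  have hw_filter : ∑ i with p i ≠ 0, w i ≤ ∑ i, w i :=
    sum_le_sum_of_subset_of_nonneg (filter_subset _ _) fun i _ _ => hw i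
  calc 0 ≤ ∑ i with p i ≠ 0, (p i - w i) := by
        rw [sum_sub_distrib, sum_filter_ne_zero]; linarith
    _ ≤ _ := sum_le_sum fun i hi =>
        have hi : p i ≠ 0 := (mem_filter.1 hi).2
        sub_le_mul_log_div ((hp i).lt_of_ne' hi) (hpw i hi)

theorem sum_mul_comp_eq_sum_marginal {α β Y : Type*} [Fintype α] [Fintype β] [Fintype Y]
    [DecidableEq β] (P : α × Y → ℝ) (c : α → β) (f : β → Y → ℝ) :
    ∑ p : α × Y, P p * f (c p.1) p.2
      = ∑ r : β × Y, (∑ a with c a = r.1, P (a, r.2)) * f r.1 r.2 := by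
  rw [Fintype.sum_prod_type, Fintype.sum_prod_type, sum_comm, sum_comm (s := univ (α := β))]
  refine sum_congr rfl fun y _ => ?_
  rw [← sum_fiberwise univ c]
  refine sum_congr rfl fun b _ => ?_
  rw [sum_mul]
  exact sum_congr rfl fun a ha => by rw [(mem_filter.1 ha).2]

section ConditionalEntropy

variable {β Y : Type*} [Fintype β] {μ : β × Y → ℝ} {ν : Y → ℝ}

theorem marginal_pos_of_ne_zero (hμ : ∀ r, 0 ≤ μ r) (hν : ∀ y, ∑ b, μ (b, y) = ν y)
    {r : β × Y} (hr : μ r ≠ 0) : 0 < ν r.2 :=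
  calc 0 < μ r := (hμ r).lt_of_ne' hr
    _ ≤ ν r.2 := hν r.2 ▸ single_le_sum (f := fun b => μ (b, r.2)) (fun _ _ => hμ _) (mem_univ r.1)

variable [Fintype Y]

theorem condEntropy_le_crossEntropy (hμ : ∀ r, 0 ≤ μ r) (hν : ∀ y, ∑ b, μ (b, y) = ν y)
    (Q : β → Y → ℝ) (hQ : ∀ b y, 0 < Q b y) :
    ∑ r with μ r ≠ 0, μ r * -logb 2 (μ r / ν r.2)
      ≤ ∑ r, μ r * -logb 2 (Q r.1 r.2 / ∑ b, Q b r.2) := by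
  set Q' : β × Y → ℝ := fun r => Q r.1 r.2 / ∑ b, Q b r.2
  have hQ' : ∀ r, 0 < Q' r := fun r =>
    div_pos (hQ _ _) (sum_pos (fun b _ => hQ b _) ⟨r.1, mem_univ _⟩)
  -- `w` is the law of `(b, Y)` with `b` drawn from the normalised metric; Gibbs compares `μ` to it.
  set w : β × Y → ℝ := fun r => Q' r * ν r.2
  have hν0 : ∀ y, 0 ≤ ν y := fun y => hν y ▸ sum_nonneg fun _ _ => hμ _
  have hw_sum : ∑ r, w r ≤ ∑ r, μ r := by
    simp only [Fintype.sum_prod_type_right, w, Q', ← sum_mul, ← sum_div, hν]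
    exact sum_le_sum fun y _ => mul_le_of_le_one_left (hν0 y) (div_self_le_one _)
  have hterm : ∀ r, μ r ≠ 0 → μ r * -logb 2 (μ r / ν r.2) + μ r * log (μ r / w r) / log 2
      = μ r * -logb 2 (Q' r) := fun r hr => by
    have hνr := marginal_pos_of_ne_zero hμ hν hr
    rw [show μ r / w r = μ r / ν r.2 / Q' r by simp only [w]; field_simp,
      log_div (div_pos ((hμ r).lt_of_ne' hr) hνr).ne' (hQ' r).ne']
    simp only [logb]
    ring
  have hgibbs : 0 ≤ ∑ r with μ r ≠ 0, μ r * log (μ r / w r) :=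
    sum_filter_mul_log_div_nonneg hμ (fun r => mul_nonneg (hQ' r).le (hν0 _))
      (fun r hr => mul_pos (hQ' r) (marginal_pos_of_ne_zero hμ hν hr)) hw_sum
  calc ∑ r with μ r ≠ 0, μ r * -logb 2 (μ r / ν r.2)
      ≤ ∑ r with μ r ≠ 0, μ r * -logb 2 (μ r / ν r.2)
          + (∑ r with μ r ≠ 0, μ r * log (μ r / w r)) / log 2 :=
        le_add_of_nonneg_right (div_nonneg hgibbs (log_nonneg one_le_two))
    _ = ∑ r with μ r ≠ 0, μ r * -logb 2 (Q' r) := by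
        rw [sum_div, ← sum_add_distrib]
        exact sum_congr rfl fun r hr => hterm r (mem_filter.1 hr).2
    _ = ∑ r, μ r * -logb 2 (Q' r) := sum_filter_of_ne fun r _ h => left_ne_zero_of_mul h

theorem condEntropy_eq_crossEntropy_of_posterior (hμ : ∀ r, 0 ≤ μ r)
    (hν : ∀ y, ∑ b, μ (b, y) = ν y) (Q : β → Y → ℝ)
    (hQ : ∀ b y, ν y ≠ 0 → Q b y = μ (b, y) / ν y) :
    ∑ r with μ r ≠ 0, μ r * -logb 2 (μ r / ν r.2)
      = ∑ r, μ r * -logb 2 (Q r.1 r.2 / ∑ b, Q b r.2) := by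
  refine Eq.trans ?_ (sum_filter_of_ne fun r _ h => left_ne_zero_of_mul h)
  refine sum_congr rfl fun r hr => ?_
  have hνr := (marginal_pos_of_ne_zero hμ hν (mem_filter.1 hr).2).ne'
  simp only [hQ _ r.2 hνr]
  rw [← sum_div, hν, div_self hνr, div_one]

end ConditionalEntropy

section Levels

variable {α β Y : Type*} [Fintype α] [Fintype β] [Fintype Y] [DecidableEq β]

theorem levelCondEntropy_le_levelUncertainty (P : α × Y → ℝ) (hP : ∀ p, 0 ≤ P p) (c : α → β)
    (Q : β → Y → ℝ) (hQ : ∀ b y, 0 < Q b y) :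
    ∑ r : β × Y with (∑ a with c a = r.1, P (a, r.2)) ≠ 0,
        (∑ a with c a = r.1, P (a, r.2)) *
          -logb 2 ((∑ a with c a = r.1, P (a, r.2)) / ∑ a, P (a, r.2))
      ≤ ∑ p : α × Y, P p * -logb 2 (Q (c p.1) p.2 / ∑ b, Q b p.2) := by
  refine (condEntropy_le_crossEntropy (μ := fun r => ∑ a with c a = r.1, P (a, r.2))
    (fun r => sum_nonneg fun _ _ => hP _) (fun y => sum_fiberwise univ c fun a => P (a, y))
    Q hQ).trans_eq ?_
  exact (sum_mul_comp_eq_sum_marginal P c fun b y => -logb 2 (Q b y / ∑ b', Q b' y)).symm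

theorem levelCondEntropy_eq_levelUncertainty_of_posterior (P : α × Y → ℝ) (hP : ∀ p, 0 ≤ P p)
    (c : α → β) (Q : β → Y → ℝ)
    (hQ : ∀ b y, ∑ a, P (a, y) ≠ 0 → Q b y = (∑ a with c a = b, P (a, y)) / ∑ a, P (a, y)) :
    ∑ r : β × Y with (∑ a with c a = r.1, P (a, r.2)) ≠ 0,
        (∑ a with c a = r.1, P (a, r.2)) *
          -logb 2 ((∑ a with c a = r.1, P (a, r.2)) / ∑ a, P (a, r.2))
      = ∑ p : α × Y, P p * -logb 2 (Q (c p.1) p.2 / ∑ b, Q b p.2) := by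
  refine (condEntropy_eq_crossEntropy_of_posterior
    (μ := fun r => ∑ a with c a = r.1, P (a, r.2))
    (fun r => sum_nonneg fun _ _ => hP _) (fun y => sum_fiberwise univ c fun a => P (a, y))
    Q hQ).trans ?_
  exact (sum_mul_comp_eq_sum_marginal P c fun b y => -logb 2 (Q b y / ∑ b', Q b' y)).symm

end Levels

theorem neg_logb_prod_div_sum_prod {ι β : Type*} [Fintype ι] [DecidableEq ι] [Fintype β]
    (q : ι → β → ℝ) (hq : ∀ i b, 0 < q i b) (a : ι → β) :
    -logb 2 ((∏ i, q i (a i)) / ∑ a' : ι → β, ∏ i, q i (a' i))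
      = ∑ i, -logb 2 (q i (a i) / ∑ b, q i b) := by
  have hZ : ∀ i, 0 < ∑ b, q i b := fun i => sum_pos (fun b _ => hq i b) ⟨a i, mem_univ _⟩
  rw [← Fintype.prod_sum, ← prod_div_distrib,
    logb_prod _ _ fun i _ => (div_pos (hq i _) (hZ i)).ne', sum_neg_distrib]

theorem uncertainty_prod_eq_sum_levelUncertainty {ι β Y : Type*} [Fintype ι] [DecidableEq ι] [Fintype β]
    [Fintype Y] (P : (ι → β) × Y → ℝ) (q : ι → β → Y → ℝ) (hq : ∀ i b y, 0 < q i b y) :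
    ∑ p : (ι → β) × Y, P p * -logb 2 ((∏ i, q i (p.1 i) p.2) / ∑ a : ι → β, ∏ i, q i (a i) p.2)
      = ∑ i, ∑ p : (ι → β) × Y, P p * -logb 2 (q i (p.1 i) p.2 / ∑ b, q i b p.2) := by
  have hsplit : ∀ p : (ι → β) × Y,
      -logb 2 ((∏ i, q i (p.1 i) p.2) / ∑ a : ι → β, ∏ i, q i (a i) p.2)
      = ∑ i, -logb 2 (q i (p.1 i) p.2 / ∑ b, q i b p.2) := fun p =>
    neg_logb_prod_div_sum_prod (fun i b => q i b p.2) (fun i b => hq i b p.2) p.1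
  simp only [hsplit, mul_sum]
  exact sum_comm

theorem bmd_rate_maximal_general
    {Y : Type*} [Fintype Y] (m : ℕ)
    (P : (Fin m → Bool) × Y → ℝ) (hP0 : ∀ p, 0 ≤ P p)
    (q : Fin m → Bool → Y → ℝ) (hq : ∀ j b y, 0 < q j b y) :
    (∑ j, ∑ p : (Fin m → Bool) × Y,
        P p * (-Real.logb 2 (q j (p.1 j) p.2 / ∑ b : Bool, q j b p.2)))
      ≥ (∑ j, ∑ r ∈ Finset.univ.filter
            (fun r : Bool × Y => (∑ a ∈ Finset.univ.filter (fun a : Fin m → Bool => a j = r.1), P (a, r.2)) ≠ 0),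
          (∑ a ∈ Finset.univ.filter (fun a : Fin m → Bool => a j = r.1), P (a, r.2))
            * (-Real.logb 2
                ((∑ a ∈ Finset.univ.filter (fun a : Fin m → Bool => a j = r.1), P (a, r.2))
                  / ∑ a : Fin m → Bool, P (a, r.2))))
    ∧ ((∀ j b y, (∑ a : Fin m → Bool, P (a, y)) ≠ 0 →
          q j b y = (∑ a ∈ Finset.univ.filter (fun a : Fin m → Bool => a j = b), P (a, y))
              / ∑ a : Fin m → Bool, P (a, y)) →
        (∑ j, ∑ p : (Fin m → Bool) × Y,
            P p * (-Real.logb 2 (q j (p.1 j) p.2 / ∑ b : Bool, q j b p.2)))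
          = (∑ j, ∑ r ∈ Finset.univ.filter
                (fun r : Bool × Y => (∑ a ∈ Finset.univ.filter (fun a : Fin m → Bool => a j = r.1), P (a, r.2)) ≠ 0),
              (∑ a ∈ Finset.univ.filter (fun a : Fin m → Bool => a j = r.1), P (a, r.2))
                * (-Real.logb 2
                    ((∑ a ∈ Finset.univ.filter (fun a : Fin m → Bool => a j = r.1), P (a, r.2))
                      / ∑ a : Fin m → Bool, P (a, r.2)))))
    ∧ max 0
        ((∑ a ∈ Finset.univ.filter (fun a : Fin m → Bool => (∑ y, P (a, y)) ≠ 0),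
            (∑ y, P (a, y)) * (-Real.logb 2 (∑ y, P (a, y))))
          - ∑ p : (Fin m → Bool) × Y,
              P p * (-Real.logb 2 ((∏ j, q j (p.1 j) p.2)
                  / ∑ a : Fin m → Bool, ∏ j, q j (a j) p.2)))
      ≤ max 0
          ((∑ a ∈ Finset.univ.filter (fun a : Fin m → Bool => (∑ y, P (a, y)) ≠ 0),
              (∑ y, P (a, y)) * (-Real.logb 2 (∑ y, P (a, y))))
            - ∑ j, ∑ r ∈ Finset.univ.filter
                  (fun r : Bool × Y => (∑ a ∈ Finset.univ.filter (fun a : Fin m → Bool => a j = r.1), P (a, r.2)) ≠ 0),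
                (∑ a ∈ Finset.univ.filter (fun a : Fin m → Bool => a j = r.1), P (a, r.2))
                  * (-Real.logb 2
                      ((∑ a ∈ Finset.univ.filter (fun a : Fin m → Bool => a j = r.1), P (a, r.2))
                        / ∑ a : Fin m → Bool, P (a, r.2)))) := by
  have hlevel : ∀ j, _ ≤ _ := fun j =>
    levelCondEntropy_le_levelUncertainty P hP0 (fun a : Fin m → Bool => a j) (q j) (hq j)
  refine ⟨sum_le_sum fun j _ => hlevel j, fun hpost => sum_congr rfl fun j _ => ?_, ?_⟩
  · exact (levelCondEntropy_eq_levelUncertainty_of_posterior P hP0 (fun a => a j) (q j)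
      (hpost j)).symm
  · rw [uncertainty_prod_eq_sum_levelUncertainty P q hq]
    exact max_le_max le_rfl (sub_le_sub_left (sum_le_sum fun j _ => hlevel j) _)

/-- For bit metrics, the sum of per-level uncertainties is at least `∑_j H(B_j|Y)`,
with equality for the posterior bit metrics; consequently the BMD rate
`[H(B) - ∑_j H(B_j|Y)]⁺` upper-bounds (and is attained by) the layered-PS rate
over bit metrics. -/
theorem bmd_rate_maximal
    {Y : Type*} [Fintype Y] [Nonempty Y] (m : ℕ) (hm : 0 < m)
    (P : (Fin m → Bool) × Y → ℝ) (hP0 : ∀ p, 0 ≤ P p) (hP1 : ∑ p, P p = 1)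
    (q : Fin m → Bool → Y → ℝ) (hq : ∀ j b y, 0 < q j b y) :
    (∑ j, ∑ p : (Fin m → Bool) × Y,
        P p * (-Real.logb 2 (q j (p.1 j) p.2 / ∑ b : Bool, q j b p.2)))
      ≥ (∑ j, ∑ r ∈ Finset.univ.filter
            (fun r : Bool × Y => (∑ a ∈ Finset.univ.filter (fun a : Fin m → Bool => a j = r.1), P (a, r.2)) ≠ 0),
          (∑ a ∈ Finset.univ.filter (fun a : Fin m → Bool => a j = r.1), P (a, r.2))
            * (-Real.logb 2
                ((∑ a ∈ Finset.univ.filter (fun a : Fin m → Bool => a j = r.1), P (a, r.2))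
                  / ∑ a : Fin m → Bool, P (a, r.2))))
    ∧ ((∀ j b y, (∑ a : Fin m → Bool, P (a, y)) ≠ 0 →
          q j b y = (∑ a ∈ Finset.univ.filter (fun a : Fin m → Bool => a j = b), P (a, y))
              / ∑ a : Fin m → Bool, P (a, y)) →
        (∑ j, ∑ p : (Fin m → Bool) × Y,
            P p * (-Real.logb 2 (q j (p.1 j) p.2 / ∑ b : Bool, q j b p.2)))
          = (∑ j, ∑ r ∈ Finset.univ.filter
                (fun r : Bool × Y => (∑ a ∈ Finset.univ.filter (fun a : Fin m → Bool => a j = r.1), P (a, r.2)) ≠ 0),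
              (∑ a ∈ Finset.univ.filter (fun a : Fin m → Bool => a j = r.1), P (a, r.2))
                * (-Real.logb 2
                    ((∑ a ∈ Finset.univ.filter (fun a : Fin m → Bool => a j = r.1), P (a, r.2))
                      / ∑ a : Fin m → Bool, P (a, r.2)))))
    ∧ max 0
        ((∑ a ∈ Finset.univ.filter (fun a : Fin m → Bool => (∑ y, P (a, y)) ≠ 0),
            (∑ y, P (a, y)) * (-Real.logb 2 (∑ y, P (a, y))))
          - ∑ p : (Fin m → Bool) × Y,
              P p * (-Real.logb 2 ((∏ j, q j (p.1 j) p.2)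
                  / ∑ a : Fin m → Bool, ∏ j, q j (a j) p.2)))
      ≤ max 0
          ((∑ a ∈ Finset.univ.filter (fun a : Fin m → Bool => (∑ y, P (a, y)) ≠ 0),
              (∑ y, P (a, y)) * (-Real.logb 2 (∑ y, P (a, y))))
            - ∑ j, ∑ r ∈ Finset.univ.filter
                  (fun r : Bool × Y => (∑ a ∈ Finset.univ.filter (fun a : Fin m → Bool => a j = r.1), P (a, r.2)) ≠ 0),
                (∑ a ∈ Finset.univ.filter (fun a : Fin m → Bool => a j = r.1), P (a, r.2))
                  * (-Real.logb 2
                      ((∑ a ∈ Finset.univ.filter (fun a : Fin m → Bool => a j = r.1), P (a, r.2))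
                        / ∑ a : Fin m → Bool, P (a, r.2)))) :=
  bmd_rate_maximal_general m P hP0 q hq
end

section
/- Consider the Hamming metric 𝟙(a,b) (1 if a=b, 0 otherwise) on a finite set X with |X| = M ≥ 2, and the exponentiated metric e^{s·𝟙(a,b)} for s > 0. For random variables X, Ŷ on X with ε := Pr(X ≠ Ŷ) ∈ (0,1), the uncertainty E[-log₂( e^{s𝟙(X,Ŷ)} / (M-1+e^s) )] is minimized over s > 0 at e^s = (M-1)(1-ε)/ε (assuming ε < (M-1)/M), and the minimum value equals H₂(ε) + ε·log₂(M-1), where H₂ is the binary entropy function. -/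
/-!
Write `A = M - 1` and `t = e^s`. The uncertainty is the base-2 cross entropy of the
error distribution `(1 - ε, ε)` against `(q, 1 - q)` with `q = t / (A + t)`, plus
`ε log₂ A`, because the wrong symbols share the mass `1 - q = A / (A + t)` equally.
By Gibbs' inequality the cross entropy is at least the entropy `H₂(ε)`, with equality
at `q = 1 - ε`, i.e. at `t = A (1 - ε) / ε`, which exceeds `1` exactly when `ε < A / M`.
-/

open Real

namespace Real

lemma mul_log_sub_mul_log_le {p q : ℝ} (hp : 0 ≤ p) (hq : 0 < q) :
    p * log q - p * log p ≤ q - p := by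
  rcases hp.eq_or_lt with rfl | hp
  · simpa using hq.le
  have h := mul_le_mul_of_nonneg_left (log_le_sub_one_of_pos (div_pos hq hp)) hp.le
  rw [log_div hq.ne' hp.ne', mul_sub_one, mul_div_cancel₀ q hp.ne'] at h
  linarith

/-- Binary cross entropy in bits of `(p, 1 - p)` relative to `(q, 1 - q)`. -/
noncomputable def binCrossEntropy (p q : ℝ) : ℝ :=
  -p * logb 2 q - (1 - p) * logb 2 (1 - q)

lemma binCrossEntropy_self_le {p q : ℝ} (hp₀ : 0 ≤ p) (hp₁ : p ≤ 1) (hq₀ : 0 < q)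
    (hq₁ : q < 1) : binCrossEntropy p p ≤ binCrossEntropy p q := by
  have h₁ := mul_log_sub_mul_log_le hp₀ hq₀
  have h₂ := mul_log_sub_mul_log_le (sub_nonneg.2 hp₁) (sub_pos.2 hq₁)
  have gap : binCrossEntropy p q - binCrossEntropy p p
      = ((p * log p - p * log q) + ((1 - p) * log (1 - p) - (1 - p) * log (1 - q))) / log 2 := by
    unfold binCrossEntropy logb
    ring
  rw [← sub_nonneg, gap]
  exact div_nonneg (by linarith) (log_pos one_lt_two).le

lemma neg_mul_logb_div_sub_mul_logb_one_div {A t : ℝ} (hA : 0 < A) (ht : 0 < t) (ε : ℝ) :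
    -(1 - ε) * logb 2 (t / (A + t)) - ε * logb 2 (1 / (A + t))
      = binCrossEntropy (1 - ε) (t / (A + t)) + ε * logb 2 A := by
  have hAt : A + t ≠ 0 := by positivity
  have hcompl : 1 - t / (A + t) = A / (A + t) := by field_simp; ring
  rw [binCrossEntropy, hcompl, sub_sub_cancel, logb_div hA.ne' hAt, logb_div one_ne_zero hAt,
    logb_one]
  ring

end Real

theorem hard_decision_uncertainty_min_general
    (M : ℕ) (ε : ℝ) (hε0 : 0 < ε) (hε1 : ε < ((M : ℝ) - 1) / M) :
    let f : ℝ → ℝ := fun s =>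
      -(1 - ε) * Real.logb 2 (Real.exp s / ((M : ℝ) - 1 + Real.exp s))
        - ε * Real.logb 2 (1 / ((M : ℝ) - 1 + Real.exp s))
    let s₀ : ℝ := Real.log (((M : ℝ) - 1) * (1 - ε) / ε)
    let H₂ : ℝ := -ε * Real.logb 2 ε - (1 - ε) * Real.logb 2 (1 - ε)
    0 < s₀ ∧ Real.exp s₀ = ((M : ℝ) - 1) * (1 - ε) / ε
      ∧ f s₀ = H₂ + ε * Real.logb 2 ((M : ℝ) - 1)
      ∧ ∀ s : ℝ, 0 < s → H₂ + ε * Real.logb 2 ((M : ℝ) - 1) ≤ f s := by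
  intro f s₀ H₂
  set A : ℝ := (M : ℝ) - 1
  have hM : (0 : ℝ) < M := by
    -- at `M = 0` the bound `(M - 1) / M` is the junk value `0`
    by_contra! h
    rw [Nat.cast_nonpos.1 h, Nat.cast_zero, div_zero] at hε1
    linarith
  have hεA : ε * M < A := (lt_div_iff₀ hM).1 hε1
  have hA : 0 < A := by nlinarith
  have hε1' : ε < 1 := by simp only [A] at hεA; nlinarith
  have hf : ∀ s, f s = binCrossEntropy (1 - ε) (exp s / (A + exp s)) + ε * logb 2 A :=
    fun s => neg_mul_logb_div_sub_mul_logb_one_div hA (exp_pos s) ε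
  have hH : H₂ = binCrossEntropy (1 - ε) (1 - ε) := by
    simp only [H₂, binCrossEntropy, sub_sub_cancel]; ring
  have hexp : exp s₀ = A * (1 - ε) / ε := exp_log (by have := sub_pos.2 hε1'; positivity)
  refine ⟨log_pos ((one_lt_div hε0).2 (by nlinarith)), hexp, ?_, fun s _ => ?_⟩
  · have hq : A * (1 - ε) / ε / (A + A * (1 - ε) / ε) = 1 - ε := by field_simp; ring
    rw [hf, hexp, hq, hH]
  · have hAs := add_pos hA (exp_pos s)
    rw [hf, hH]
    gcongr
    exact binCrossEntropy_self_le (by linarith) (by linarith) (by positivity)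
      ((div_lt_one hAs).2 (by linarith))

/-- For the exponentiated Hamming metric on an alphabet of size `M ≥ 2`, with error
probability `ε ∈ (0,(M-1)/M)`, the uncertainty
`-(1-ε) log₂(e^s/(M-1+e^s)) - ε log₂(1/(M-1+e^s))` is minimized over `s > 0` at
`e^s = (M-1)(1-ε)/ε`, with minimum value `H₂(ε) + ε log₂(M-1)`. -/
theorem hard_decision_uncertainty_min
    (M : ℕ) (hM : 2 ≤ M) (ε : ℝ) (hε0 : 0 < ε) (hε1 : ε < ((M : ℝ) - 1) / M) :
    let f : ℝ → ℝ := fun s =>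
      -(1 - ε) * Real.logb 2 (Real.exp s / ((M : ℝ) - 1 + Real.exp s))
        - ε * Real.logb 2 (1 / ((M : ℝ) - 1 + Real.exp s))
    let s₀ : ℝ := Real.log (((M : ℝ) - 1) * (1 - ε) / ε)
    let H₂ : ℝ := -ε * Real.logb 2 ε - (1 - ε) * Real.logb 2 (1 - ε)
    0 < s₀ ∧ Real.exp s₀ = ((M : ℝ) - 1) * (1 - ε) / ε
      ∧ f s₀ = H₂ + ε * Real.logb 2 ((M : ℝ) - 1)
      ∧ ∀ s : ℝ, 0 < s → H₂ + ε * Real.logb 2 ((M : ℝ) - 1) ≤ f s :=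
  hard_decision_uncertainty_min_general M ε hε0 hε1
end
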